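/- A circular ab-chain with all worlds having pairwise distinct 'colors' at specified positions (valuations 00, 01, 10, 11 occurring on four distinct arcs, as in Sq ⊙ IS^n) is bisimulation minimal: no two distinct worlds of a circular ab-chain in which antipodal arcs carry different valuations are bisimilar. -/

import Mathlib

namespace Stmt10

/-- The two agents: `false` is agent `a`, `true` is agent `b`. -/
abbrev Agent := Bool

inductive Pat : Type
  | Rab | Rba | U

def recv : Pat → Agent → Set Agent
  | Pat.Rab, false => {false}
  | Pat.Rab, true => Set.univ
  | Pat.Rba, false => Set.univ
  | Pat.Rba, true => {true}
  | Pat.U, _ => Set.univ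

/-- Worlds of `Sq ⊙ IS^n`, a circular `ab`-chain whose cycle is divided into
four arcs carrying the four valuations of `{p_a,p_b}`. -/
def WIter : ℕ → Type
  | 0 => Bool × Bool
  | n + 1 => WIter n × Pat

def simIter : (n : ℕ) → Agent → WIter n → WIter n → Prop
  | 0, c, w, w' => if c then w.2 = w'.2 else w.1 = w'.1
  | n + 1, c, x, y => recv x.2 c = recv y.2 c ∧ ∀ d ∈ recv x.2 c, simIter n d x.1 y.1

/-- The valuation of a world of `Sq ⊙ IS^n` (the valuation of its underlying
`Sq`-world). -/
def valIter : (n : ℕ) → WIter n → Bool × Bool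
  | 0, w => w
  | n + 1, x => valIter n x.1

/-!
The worlds of `Sq ⊙ IS^n` form one cycle of length `4 * 3 ^ n` on which every world has exactly
one `a`-partner and one `b`-partner, and the valuation is constant on four arcs of length `3 ^ n`,
in the order `00, 01, 11, 10`. The equivalence closure of a bisimulation still satisfies forth and
back for each single agent; since each agent pairs a world with exactly one partner, it is
therefore invariant under both partner maps (the bisimulation itself need not be). Walking around
the cycle from two related worlds `x` and `y` then relates `x + j` to `y + j` for all `j` when
`x` and `y` have the same parity, and `x + j` to `y - j` otherwise. In the first case the arc
colouring is periodic with period `y - x`, so `x = y`; in the second it is invariant under a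
reflection, which four distinct arcs rule out.
-/

theorem rel_iterate {α : Type*} {r : α → α → Prop} {f g : α → α}
    (h : ∀ x y, r x y → r (f x) (g y)) {x y : α} (hxy : r x y) (j : ℕ) :
    r (f^[j] x) (g^[j] y) := by
  induction j with
  | zero => exact hxy
  | succ j ih => simpa only [Function.iterate_succ_apply'] using h _ _ ih

section Zigzag

variable {ι W : Type*} {R : ι → W → W → Prop}

def IsZigzag (R : ι → W → W → Prop) (Z : W → W → Prop) : Prop :=
  ∀ c x y, Z x y →
    (∀ x', R c x x' → ∃ y', R c y y' ∧ Z x' y') ∧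
    (∀ y', R c y y' → ∃ x', R c x x' ∧ Z x' y')

theorem IsZigzag.eqvGen {Z : W → W → Prop} (h : IsZigzag R Z) :
    IsZigzag R (Relation.EqvGen Z) := by
  intro c x y hxy
  induction hxy with
  | rel x y hxy =>
    obtain ⟨hforth, hback⟩ := h c x y hxy
    exact ⟨fun x' hx => (hforth x' hx).imp fun _ => .imp_right (.rel _ _),
      fun y' hy => (hback y' hy).imp fun _ => .imp_right (.rel _ _)⟩
  | refl x => exact ⟨fun x' hx => ⟨x', hx, .refl _⟩, fun y' hy => ⟨y', hy, .refl _⟩⟩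
  | symm x y _ ih =>
    exact ⟨fun y' hy => (ih.2 y' hy).imp fun _ => .imp_right (.symm _ _),
      fun x' hx => (ih.1 x' hx).imp fun _ => .imp_right (.symm _ _)⟩
  | trans x y z _ _ ihxy ihyz =>
    refine ⟨fun x' hx => ?_, fun z' hz => ?_⟩
    · obtain ⟨y', hy, hxy'⟩ := ihxy.1 x' hx
      obtain ⟨z', hz, hyz'⟩ := ihyz.1 y' hy
      exact ⟨z', hz, .trans _ _ _ hxy' hyz'⟩
    · obtain ⟨y', hy, hyz'⟩ := ihyz.2 z' hz
      obtain ⟨x', hx, hxy'⟩ := ihxy.2 y' hy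
      exact ⟨x', hx, .trans _ _ _ hxy' hyz'⟩

theorem IsZigzag.rel_partner {E : W → W → Prop} {σ : ι → W → W}
    (hR : ∀ c x y, R c x y ↔ y = x ∨ y = σ c x) (hE : Equivalence E) (h : IsZigzag R E)
    {x y : W} (hxy : E x y) (c : ι) : E (σ c x) (σ c y) := by
  obtain ⟨y', hy', hxy'⟩ := (h c x y hxy).1 (σ c x) ((hR c x _).2 (.inr rfl))
  rcases (hR c y y').1 hy' with rfl | rfl
  · obtain ⟨x', hx', hxy''⟩ := (h c x y' hxy).2 (σ c y') ((hR c y' _).2 (.inr rfl))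
    rcases (hR c x x').1 hx' with rfl | rfl
    · exact hE.trans hxy' (hE.trans (hE.symm hxy) hxy'')
    · exact hxy''
  · exact hxy'

end Zigzag

theorem ZMod.natCast_eq_natCast_add_one {N a b : ℕ} (h : a = b + 1 ∨ a = 0 ∧ b + 1 = N) :
    (a : ZMod N) = b + 1 := by
  rcases h with rfl | ⟨rfl, rfl⟩ <;> simp

def arc (m : ℕ) (q : ZMod (4 * m)) : ℕ := q.val / m

theorem arc_zero (m : ℕ) : arc m 0 = 0 := by
  simp [arc]

section Arc

variable {m : ℕ} [NeZero m]

theorem arc_eq_zero_iff (q : ZMod (4 * m)) : arc m q = 0 ↔ q.val < m := by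
  simp [arc, Nat.div_eq_zero_iff, NeZero.ne m]

theorem eq_of_forall_arc_add_eq {a b : ZMod (4 * m)}
    (h : ∀ j : ℕ, arc m (a + j) = arc m (b + j)) : a = b := by
  have hba := h (-a).val
  have hab := h (-b).val
  simp only [ZMod.natCast_zmod_val, add_neg_cancel, ← sub_eq_add_neg] at hba hab
  rw [arc_zero, eq_comm, arc_eq_zero_iff] at hba
  rw [arc_zero, arc_eq_zero_iff] at hab
  by_contra hne
  have hsum := ZMod.neg_val (b - a)
  rw [neg_sub, if_neg (sub_ne_zero.2 (Ne.symm hne))] at hsum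
  have := (b - a).val_lt
  omega

theorem not_forall_arc_add_eq_arc_sub (a b : ZMod (4 * m)) :
    ¬ ∀ j : ℕ, arc m (a + j) = arc m (b - j) := by
  intro h
  have hs := h (-a).val
  have hm := h ((m : ZMod (4 * m)) - a).val
  simp only [ZMod.natCast_zmod_val, add_neg_cancel, sub_neg_eq_add, add_sub_cancel] at hs hm
  rw [arc_zero, eq_comm, arc_eq_zero_iff] at hs
  have hpos := NeZero.pos m
  have harc_m : arc m m = 1 := by
    rw [arc, ZMod.val_cast_of_lt (by omega), Nat.div_self hpos]
  have hsub : b - ((m : ZMod (4 * m)) - a) = ((b + a).val + 3 * m : ℕ) := by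
    have := ZMod.natCast_self (4 * m)
    push_cast at this ⊢
    rw [ZMod.natCast_zmod_val]
    linear_combination -this
  have harc_sub : arc m (b - ((m : ZMod (4 * m)) - a)) = 3 := by
    rw [hsub, arc, ZMod.val_cast_of_lt (by omega), Nat.add_mul_div_right _ _ hpos,
      Nat.div_eq_of_lt hs]
  omega

end Arc

def partner : (n : ℕ) → Agent → WIter n → WIter n
  | 0, c, w => if c then (!w.1, w.2) else (w.1, !w.2)
  | n + 1, false, (w, Pat.Rab) => (partner n false w, Pat.Rab)
  | _ + 1, false, (w, Pat.Rba) => (w, Pat.U)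
  | _ + 1, false, (w, Pat.U) => (w, Pat.Rba)
  | n + 1, true, (w, Pat.Rba) => (partner n true w, Pat.Rba)
  | _ + 1, true, (w, Pat.Rab) => (w, Pat.U)
  | _ + 1, true, (w, Pat.U) => (w, Pat.Rab)

theorem simIter_refl : ∀ (n : ℕ) (c : Agent) (x : WIter n), simIter n c x x
  | 0, false, _ | 0, true, _ => rfl
  | n + 1, _, x => ⟨rfl, fun d _ => simIter_refl n d x.1⟩

theorem simIter_false_and_simIter_true_iff :
    ∀ (n : ℕ) (x y : WIter n), simIter n false x y ∧ simIter n true x y ↔ y = x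
  | 0, (a, b), (a', b') => by simp [WIter, simIter, eq_comm]
  | n + 1, (w, p), (w', p') => by
    cases p <;> cases p' <;>
      simp [WIter, simIter, recv, Set.ext_iff, simIter_false_and_simIter_true_iff n w w'] <;>
      rintro rfl <;> apply simIter_refl

theorem simIter_iff : ∀ (n : ℕ) (c : Agent) (x y : WIter n),
    simIter n c x y ↔ y = x ∨ y = partner n c x
  | 0, c, (a, b), (a', b') => by
    cases c <;> cases a <;> cases b <;> cases a' <;> cases b' <;> simp [WIter, simIter, partner]
  | n + 1, c, (w, p), (w', p') => by
    cases c <;> cases p <;> cases p' <;>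
      simp [WIter, simIter, recv, partner, Set.ext_iff,
        simIter_false_and_simIter_true_iff n w w'] <;>
      simp [simIter_iff n _ w w']

/-- Level `n + 1` replaces the world at position `k` by the path
`(·, Rba) -a- (·, U) -b- (·, Rab)` at positions `3k, 3k+1, 3k+2`, reversed for odd `k` so that
`(·, Rab)` faces the `a`-neighbour of `k`. -/
def offset (k : ℕ) : Pat → ℕ
  | Pat.Rba => if k % 2 = 0 then 0 else 2
  | Pat.U => 1
  | Pat.Rab => if k % 2 = 0 then 2 else 0

/-- Level `0` is the square `00 -a- 01 -b- 11 -a- 10 -b- 00`. -/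
def pos : (n : ℕ) → WIter n → ℕ
  | 0, (false, false) => 0
  | 0, (false, true) => 1
  | 0, (true, true) => 2
  | 0, (true, false) => 3
  | n + 1, (w, p) => 3 * pos n w + offset (pos n w) p

theorem offset_lt (k : ℕ) (p : Pat) : offset k p < 3 := by
  unfold offset
  split <;> (try split) <;> omega

theorem offset_injective (k : ℕ) : Function.Injective (offset k) := by
  intro p q h
  cases p <;> cases q <;> simp only [offset] at h <;> first | rfl | (split at h <;> omega)

theorem pos_lt : ∀ (n : ℕ) (x : WIter n), pos n x < 4 * 3 ^ n
  | 0, (a, b) => by cases a <;> cases b <;> simp [pos]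
  | n + 1, (w, p) => by
    have := pos_lt n w
    have := offset_lt (pos n w) p
    simp only [pos, pow_succ]
    omega

theorem pos_injective : ∀ n, Function.Injective (pos n)
  | 0, (a, b), (a', b'), h => by
    cases a <;> cases b <;> cases a' <;> cases b' <;> simp_all [pos] <;> rfl
  | n + 1, (w, p), (w', p'), h => by
    have := offset_lt (pos n w) p
    have := offset_lt (pos n w') p'
    simp only [pos] at h
    have hw : w = w' := pos_injective n (by omega)
    subst hw
    simp [WIter, offset_injective (pos n w) (by omega : offset (pos n w) p = offset (pos n w) p')]

theorem pos_div_pow : ∀ (n : ℕ) (x : WIter n), pos n x / 3 ^ n = pos 0 (valIter n x)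
  | 0, x => Nat.div_one _
  | n + 1, (w, p) => by
    show pos (n + 1) (w, p) / 3 ^ (n + 1) = pos 0 (valIter n w)
    rw [← pos_div_pow n w, pow_succ', ← Nat.div_div_eq_div_mul]
    congr 1
    simp only [pos]
    have := offset_lt (pos n w) p
    omega

theorem pos_partner_false : ∀ (n : ℕ) (x : WIter n),
    (pos n x % 2 = 0 ∧ pos n (partner n false x) = pos n x + 1) ∨
    (pos n x % 2 = 1 ∧ pos n (partner n false x) + 1 = pos n x)
  | 0, (a, b) => by cases a <;> cases b <;> simp [pos, partner]
  | n + 1, (w, p) => by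
    have := pos_partner_false n w
    cases p <;> simp only [pos, partner, offset] <;> split_ifs <;> omega

theorem pos_partner_true : ∀ (n : ℕ) (x : WIter n),
    (pos n x = 0 ∧ pos n (partner n true x) = 4 * 3 ^ n - 1) ∨
    (pos n x % 2 = 0 ∧ 0 < pos n x ∧ pos n (partner n true x) + 1 = pos n x) ∨
    (pos n x = 4 * 3 ^ n - 1 ∧ pos n (partner n true x) = 0) ∨
    (pos n x % 2 = 1 ∧ pos n x + 1 < 4 * 3 ^ n ∧ pos n (partner n true x) = pos n x + 1)
  | 0, (a, b) => by cases a <;> cases b <;> simp [pos, partner]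
  | n + 1, (w, p) => by
    have := pos_partner_true n w
    have := pos_lt n w
    cases p <;> simp only [pos, partner, offset, pow_succ] <;> split_ifs <;> omega

section Cycle

variable {n : ℕ}

/-- The agent of the edge from a world to its successor on the cycle: `a` at even positions. -/
def fwdAgent (n : ℕ) (x : WIter n) : Agent := decide (pos n x % 2 = 1)

def next (n : ℕ) (x : WIter n) : WIter n := partner n (fwdAgent n x) x

def prev (n : ℕ) (x : WIter n) : WIter n := partner n (!fwdAgent n x) x

def cyc (n : ℕ) (x : WIter n) : ZMod (4 * 3 ^ n) := pos n x

theorem fwdAgent_partner (c : Agent) (x : WIter n) :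
    fwdAgent n (partner n c x) = !fwdAgent n x := by
  have := pos_lt n x
  have := pos_partner_false n x
  have := pos_partner_true n x
  rw [fwdAgent, fwdAgent, ← decide_not, decide_eq_decide]
  cases c <;> omega

theorem cyc_next (x : WIter n) : cyc n (next n x) = cyc n x + 1 := by
  have := pos_lt n x
  have := pos_partner_false n x
  have := pos_partner_true n x
  refine ZMod.natCast_eq_natCast_add_one ?_
  by_cases h : pos n x % 2 = 1 <;>
    simp only [next, fwdAgent, h, decide_true, decide_false] <;> omega

theorem cyc_prev (x : WIter n) : cyc n (prev n x) = cyc n x - 1 := by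
  have := pos_lt n x
  have := pos_partner_false n x
  have := pos_partner_true n x
  refine eq_sub_of_add_eq (ZMod.natCast_eq_natCast_add_one ?_).symm
  by_cases h : pos n x % 2 = 1 <;>
    simp only [prev, fwdAgent, h, decide_true, decide_false, Bool.not_true, Bool.not_false] <;>
    omega

theorem cyc_iterate_next (x : WIter n) (j : ℕ) : cyc n ((next n)^[j] x) = cyc n x + j := by
  induction j with
  | zero => simp
  | succ j ih => rw [Function.iterate_succ_apply', cyc_next, ih, Nat.cast_succ, add_assoc]

theorem cyc_iterate_prev (x : WIter n) (j : ℕ) : cyc n ((prev n)^[j] x) = cyc n x - j := by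
  induction j with
  | zero => simp
  | succ j ih =>
    rw [Function.iterate_succ_apply', cyc_prev, ih, Nat.cast_succ, sub_add_eq_sub_sub]

theorem cyc_injective : Function.Injective (cyc n) := fun x y h =>
  pos_injective n (by simpa [cyc, ZMod.val_cast_of_lt (pos_lt n _)] using congrArg ZMod.val h)

end Cycle

theorem arc_cyc {n : ℕ} (x : WIter n) : arc (3 ^ n) (cyc n x) = pos 0 (valIter n x) := by
  rw [arc, cyc, ZMod.val_cast_of_lt (pos_lt n x), pos_div_pow]

theorem eq_of_rel_of_partner_invariant {n : ℕ} {E : WIter n → WIter n → Prop}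
    (hval : ∀ x y, E x y → valIter n x = valIter n y)
    (hpartner : ∀ c x y, E x y → E (partner n c x) (partner n c y)) {x y : WIter n}
    (h : E x y) : x = y := by
  by_cases hxy : fwdAgent n x = fwdAgent n y
  · have hwalk := rel_iterate (r := fun x y => E x y ∧ fwdAgent n x = fwdAgent n y)
      (f := next n) (g := next n) (fun x y ⟨hE, hag⟩ => by
        refine ⟨?_, by rw [next, next, fwdAgent_partner, fwdAgent_partner, hag]⟩
        rw [next, next, hag]
        exact hpartner _ _ _ hE) ⟨h, hxy⟩
    refine cyc_injective (eq_of_forall_arc_add_eq fun j => ?_)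
    rw [← cyc_iterate_next, ← cyc_iterate_next, arc_cyc, arc_cyc, hval _ _ (hwalk j).1]
  · have hwalk := rel_iterate (r := fun x y => E x y ∧ fwdAgent n x = !fwdAgent n y)
      (f := next n) (g := prev n) (fun x y ⟨hE, hag⟩ => by
        refine ⟨?_, by rw [next, prev, fwdAgent_partner, fwdAgent_partner, hag]⟩
        rw [next, prev, hag]
        exact hpartner _ _ _ hE) ⟨h, Bool.eq_not_of_ne hxy⟩
    refine absurd (fun j => ?_) (not_forall_arc_add_eq_arc_sub (cyc n x) (cyc n y))
    rw [← cyc_iterate_next, ← cyc_iterate_prev, arc_cyc, arc_cyc, hval _ _ (hwalk j).1]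

/-- The circular `ab`-chain `Sq ⊙ IS^n`, with its four valuation arcs, is
bisimulation minimal: any collective bisimulation of the model with itself
(atoms, forth and back for all nonempty groups) only relates a world to
itself; i.e. no two distinct worlds are bisimilar. -/
theorem sq_iter_bisimulation_minimal (n : ℕ) (Z : WIter n → WIter n → Prop)
    (hatoms : ∀ x y, Z x y → valIter n x = valIter n y)
    (hforth : ∀ B : Set Agent, B.Nonempty → ∀ x x' y, Z x y →
      (∀ c ∈ B, simIter n c x x') → ∃ y', (∀ c ∈ B, simIter n c y y') ∧ Z x' y')
    (hback : ∀ B : Set Agent, B.Nonempty → ∀ x y y', Z x y →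
      (∀ c ∈ B, simIter n c y y') → ∃ x', (∀ c ∈ B, simIter n c x x') ∧ Z x' y') :
    ∀ x y, Z x y → x = y := by
  intro x y hxy
  have hZ : IsZigzag (simIter n) Z := fun c x y hxy =>
    ⟨fun x' hx => by simpa using hforth {c} (Set.singleton_nonempty c) x x' y hxy (by simpa),
      fun y' hy => by simpa using hback {c} (Set.singleton_nonempty c) x y y' hxy (by simpa)⟩
  have hval : ∀ x y, Relation.EqvGen Z x y → valIter n x = valIter n y := fun _ _ h =>
    congrArg (Quot.lift (valIter n) hatoms) (Quot.eqvGen_sound h)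
  have hpartner : ∀ c x y, Relation.EqvGen Z x y →
      Relation.EqvGen Z (partner n c x) (partner n c y) := fun c _ _ h =>
    hZ.eqvGen.rel_partner (simIter_iff n) (Relation.EqvGen.is_equivalence Z) h c
  exact eq_of_rel_of_partner_invariant hval hpartner (.rel _ _ hxy)

end Stmt10
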